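/- arXiv:1901.01457 — 5 statements merged into one kernel-verified Lean document; each statement's English description precedes it below -/
import Mathlib

section
/- Let G be a countable group, let A, B ⊆ G, let F and F₁ be nonempty finite subsets of G, and let ε > 0. If F₁ is (F,ε)-invariant, then D_{F₁}(B,A) ≥ D_F(B,A) − 4ε. -/
open scoped Pointwise symmDiff

variable {G : Type*}

/-- The lower density advantage of `B` over `A` with respect to the finite set `F`:
`D_F(B,A) = inf_{g ∈ G} (|B ∩ Fg| − |A ∩ Fg|)/|F|`. -/
noncomputable def dadvF [Group G] (F : Finset G) (B A : Set G) : ℝ :=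
  ⨅ g : G,
    (((B ∩ ((F : Set G) * {g})).ncard : ℝ) - ((A ∩ ((F : Set G) * {g})).ncard : ℝ)) /
      (F.card : ℝ)

private lemma ncard_inter_coe' [DecidableEq G] (C : Set G) [DecidablePred (· ∈ C)]
    (T : Finset G) : (C ∩ ↑T).ncard = (T.filter (· ∈ C)).card := by
  rw [← Set.ncard_coe_finset (T.filter (· ∈ C))]
  congr 1
  ext x
  simp [Finset.mem_filter, and_comm]

/-- counting in a finset image under an injective map -/
private lemma count_image [DecidableEq G] (C : Set G) [DecidablePred (· ∈ C)]
    (T : Finset G) (φ : G → G) (hφ : Function.Injective φ) :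
    ((T.image φ).filter (· ∈ C)).card = ∑ g ∈ T, (if φ g ∈ C then 1 else 0) := by
  rw [Finset.filter_image, Finset.card_image_of_injective _ hφ, Finset.card_filter]

/-- basic counting comparison: `|T₁ ∩ C| ≤ |T₂ ∩ C| + |T₁ \ T₂|` -/
private lemma count_le [DecidableEq G] (C : Set G) [DecidablePred (· ∈ C)]
    (T₁ T₂ : Finset G) :
    (T₁.filter (· ∈ C)).card ≤ (T₂.filter (· ∈ C)).card + (T₁ \ T₂).card := by
  calc (T₁.filter (· ∈ C)).card ≤ (T₂.filter (· ∈ C) ∪ (T₁ \ T₂)).card := by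
        apply Finset.card_le_card
        intro x hx
        rw [Finset.mem_filter] at hx
        by_cases h : x ∈ T₂
        · exact Finset.mem_union_left _ (Finset.mem_filter.2 ⟨h, hx.2⟩)
        · exact Finset.mem_union_right _ (Finset.mem_sdiff.2 ⟨hx.1, h⟩)
      _ ≤ _ := Finset.card_union_le _ _

/-- If `F₁` is `(F,ε)`-invariant then `D_{F₁}(B,A) ≥ D_F(B,A) − 4ε`. -/
theorem dadvF_ge_of_invariant [Group G] [Countable G] [DecidableEq G]
    (A B : Set G) (F F₁ : Finset G) (hF : F.Nonempty) (hF₁ : F₁.Nonempty)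
    (ε : ℝ) (hε : 0 < ε)
    (hinv : (((F * F₁) ∆ F₁).card : ℝ) < ε * (F₁.card : ℝ)) :
    dadvF F B A - 4 * ε ≤ dadvF F₁ B A := by
  classical
  set d : ℝ := dadvF F B A with hd
  have hnF : (0 : ℝ) < F.card := by exact_mod_cast Finset.card_pos.2 hF
  have hnF₁ : (0 : ℝ) < F₁.card := by exact_mod_cast Finset.card_pos.2 hF₁
  set D : ℕ := ((F * F₁) ∆ F₁).card with hD
  set c : Set G → Finset G → ℕ := fun C T => (T.filter (· ∈ C)).card with hc
  have hcoe : ∀ (C : Set G) (T : Finset G), (C ∩ (↑T : Set G)).ncard = c C T := by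
    intro C T; exact ncard_inter_coe' C T
  have hco : ∀ (T : Finset G) (g : G), ((T : Set G) * {g}) = ↑(T * {g} : Finset G) := by
    intro T g; simp [Finset.coe_mul]
  -- the range of the `F`-infimum is bounded below
  have hbdd : BddBelow (Set.range fun g : G =>
      (((B ∩ ((F : Set G) * {g})).ncard : ℝ) - ((A ∩ ((F : Set G) * {g})).ncard : ℝ)) /
        (F.card : ℝ)) := by
    refine ⟨-1, ?_⟩
    rintro x ⟨g, rfl⟩
    have h3 : (F * {g} : Finset G).card = F.card := by
      rw [Finset.mul_singleton]
      exact Finset.card_image_of_injective _ (mul_left_injective g)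
    have h1 : ((A ∩ ((F : Set G) * {g})).ncard : ℝ) ≤ (F.card : ℝ) := by
      have hfin : ((F : Set G) * {g}).Finite :=
        Set.Finite.mul F.finite_toSet (Set.finite_singleton g)
      have hle : (A ∩ ((F : Set G) * {g})).ncard ≤ ((F : Set G) * {g}).ncard :=
        Set.ncard_le_ncard Set.inter_subset_right hfin
      have h2 : ((F : Set G) * {g}).ncard = (F * {g} : Finset G).card := by
        rw [hco, Set.ncard_coe_finset]
      rw [h2, h3] at hle
      exact_mod_cast hle
    have h0 : (0 : ℝ) ≤ ((B ∩ ((F : Set G) * {g})).ncard : ℝ) := by positivity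
    rw [le_div_iff₀ hnF]
    nlinarith
  -- each `F`-term is at least `d * |F|`
  have hterm : ∀ g : G, d * (F.card : ℝ) ≤
      ((c B (F * {g}) : ℝ) - (c A (F * {g}) : ℝ)) := by
    intro g
    have h1 : d ≤ (((B ∩ ((F : Set G) * {g})).ncard : ℝ) -
        ((A ∩ ((F : Set G) * {g})).ncard : ℝ)) / (F.card : ℝ) := by
      rw [hd, dadvF]; exact ciInf_le hbdd g
    rw [hco, hcoe, hcoe] at h1
    calc d * (F.card : ℝ)
        ≤ (((c B (F * {g}) : ℝ) - (c A (F * {g}) : ℝ)) / (F.card : ℝ)) * (F.card : ℝ) :=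
          mul_le_mul_of_nonneg_right h1 (le_of_lt hnF)
      _ = (c B (F * {g}) : ℝ) - (c A (F * {g}) : ℝ) := by field_simp
  -- the main estimate, for every h
  have key : ∀ h : G, d - 4 * ε ≤
      (((B ∩ ((F₁ : Set G) * {h})).ncard : ℝ) - ((A ∩ ((F₁ : Set G) * {h})).ncard : ℝ)) /
        (F₁.card : ℝ) := by
    intro h
    set S : Finset G := F₁ * {h} with hS
    set Tf : G → Finset G := fun f => {f} * F₁ * {h} with hTf
    have himg : ∀ (s : Finset G) (a : G), s * {a} = s.image (· * a) := by
      intro s a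
      ext x
      simp only [Finset.mem_mul, Finset.mem_image, Finset.mem_singleton]
      constructor
      · rintro ⟨y, hy, z, rfl, rfl⟩; exact ⟨y, hy, rfl⟩
      · rintro ⟨y, hy, rfl⟩; exact ⟨y, hy, a, rfl, rfl⟩
    have hTf_img : ∀ f : G, Tf f = F₁.image (fun g => f * g * h) := by
      intro f
      ext x
      simp only [hTf, Finset.mem_mul, Finset.mem_image, Finset.mem_singleton]
      constructor
      · rintro ⟨y, ⟨a, rfl, b, hb, rfl⟩, z, rfl, rfl⟩
        exact ⟨b, hb, rfl⟩
      · rintro ⟨b, hb, rfl⟩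
        exact ⟨f * b, ⟨f, rfl, b, hb, rfl⟩, h, rfl, rfl⟩
    have hinj1 : ∀ f : G, Function.Injective (fun g => f * g * h : G → G) := by
      intro f x y hxy
      simpa using hxy
    have hinjr : ∀ a : G, Function.Injective (fun x => x * a : G → G) :=
      fun a => mul_left_injective a
    -- double counting identity
    have hdouble : ∀ C : Set G, ∑ f ∈ F, c C (Tf f) = ∑ g ∈ F₁, c C (F * {g * h}) := by
      intro C
      calc ∑ f ∈ F, c C (Tf f)
          = ∑ f ∈ F, ∑ g ∈ F₁, (if f * g * h ∈ C then 1 else 0) := by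
            refine Finset.sum_congr rfl fun f _ => ?_
            rw [hc]
            simp only
            rw [hTf_img f]
            exact count_image C F₁ _ (hinj1 f)
        _ = ∑ g ∈ F₁, ∑ f ∈ F, (if f * g * h ∈ C then 1 else 0) := Finset.sum_comm
        _ = ∑ g ∈ F₁, c C (F * {g * h}) := by
            refine Finset.sum_congr rfl fun g _ => ?_
            rw [hc]
            simp only
            rw [himg F (g * h), count_image C F _ (hinjr (g * h))]
            simp [mul_assoc]
    -- deficit bounds
    have hsub : ∀ f ∈ F, ({f} * F₁ : Finset G) ⊆ F * F₁ := by
      intro f hf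
      exact Finset.mul_subset_mul_right (Finset.singleton_subset_iff.2 hf)
    have hDbound : ∀ s : Finset G, s ⊆ F * F₁ → (s \ F₁).card ≤ D := by
      intro s hs
      rw [hD]
      apply Finset.card_le_card
      intro x hx
      rw [Finset.mem_sdiff] at hx
      rw [symmDiff_def]
      exact Finset.mem_union_left _ (Finset.mem_sdiff.2 ⟨hs hx.1, hx.2⟩)
    have hdef1 : ∀ f ∈ F, ((Tf f) \ S).card ≤ D := by
      intro f hf
      have e : (Tf f) \ S = (({f} * F₁) \ F₁).image (· * h) := by
        rw [show Tf f = ({f} * F₁) * {h} from rfl, hS, himg, himg,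
          Finset.image_sdiff _ _ (hinjr h)]
      rw [e, Finset.card_image_of_injective _ (hinjr h)]
      exact hDbound _ (hsub f hf)
    have hdef2 : ∀ f ∈ F, (S \ (Tf f)).card ≤ D := by
      intro f hf
      have e : S \ (Tf f) = (F₁ \ ({f} * F₁)).image (· * h) := by
        rw [show Tf f = ({f} * F₁) * {h} from rfl, hS, himg, himg,
          Finset.image_sdiff _ _ (hinjr h)]
      rw [e, Finset.card_image_of_injective _ (hinjr h)]
      have hcard : ({f} * F₁ : Finset G).card = F₁.card := Finset.card_singleton_mul f F₁
      have e1 : (F₁ \ ({f} * F₁)).card + (F₁ ∩ ({f} * F₁)).card = F₁.card :=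
        Finset.card_sdiff_add_card_inter _ _
      have e2 : (({f} * F₁) \ F₁).card + (({f} * F₁) ∩ F₁).card = ({f} * F₁ : Finset G).card :=
        Finset.card_sdiff_add_card_inter _ _
      have e3 : (F₁ ∩ ({f} * F₁)).card = (({f} * F₁) ∩ F₁).card := by
        rw [Finset.inter_comm]
      have e4 : (F₁ \ ({f} * F₁)).card = (({f} * F₁) \ F₁).card := by omega
      rw [e4]
      exact hDbound _ (hsub f hf)
    -- per-f comparison in ℝ
    have hcmp : ∀ f ∈ F, (c B (Tf f) : ℝ) - (c A (Tf f) : ℝ) ≤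
        ((c B S : ℝ) - (c A S : ℝ)) + 2 * (D : ℝ) := by
      intro f hf
      have h1 : (c B (Tf f) : ℝ) ≤ (c B S : ℝ) + (D : ℝ) := by
        have := count_le B (Tf f) S
        have h2 := hdef1 f hf
        rw [hc]; push_cast
        have : c B (Tf f) ≤ c B S + ((Tf f) \ S).card := count_le B (Tf f) S
        have : c B (Tf f) ≤ c B S + D := le_trans this (by omega)
        exact_mod_cast this
      have h2 : (c A S : ℝ) ≤ (c A (Tf f) : ℝ) + (D : ℝ) := by
        have h3 := hdef2 f hf
        have : c A S ≤ c A (Tf f) + (S \ (Tf f)).card := count_le A S (Tf f)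
        have : c A S ≤ c A (Tf f) + D := le_trans this (by omega)
        exact_mod_cast this
      linarith
    -- sum over f and combine
    have hsum1 : (F₁.card : ℝ) * (d * (F.card : ℝ)) ≤
        ∑ f ∈ F, ((c B (Tf f) : ℝ) - (c A (Tf f) : ℝ)) := by
      have e : ∑ f ∈ F, ((c B (Tf f) : ℝ) - (c A (Tf f) : ℝ)) =
          ∑ g ∈ F₁, ((c B (F * {g * h}) : ℝ) - (c A (F * {g * h}) : ℝ)) := by
        rw [Finset.sum_sub_distrib, Finset.sum_sub_distrib]
        congr 1
        · exact_mod_cast congrArg (Nat.cast : ℕ → ℝ) (hdouble B)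
        · exact_mod_cast congrArg (Nat.cast : ℕ → ℝ) (hdouble A)
      rw [e]
      calc (F₁.card : ℝ) * (d * (F.card : ℝ)) = ∑ _g ∈ F₁, d * (F.card : ℝ) := by
            rw [Finset.sum_const, nsmul_eq_mul]
        _ ≤ _ := Finset.sum_le_sum fun g _ => hterm (g * h)
    have hsum2 : ∑ f ∈ F, ((c B (Tf f) : ℝ) - (c A (Tf f) : ℝ)) ≤
        (F.card : ℝ) * (((c B S : ℝ) - (c A S : ℝ)) + 2 * (D : ℝ)) := by
      calc ∑ f ∈ F, ((c B (Tf f) : ℝ) - (c A (Tf f) : ℝ))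
          ≤ ∑ _f ∈ F, (((c B S : ℝ) - (c A S : ℝ)) + 2 * (D : ℝ)) :=
            Finset.sum_le_sum hcmp
        _ = (F.card : ℝ) * (((c B S : ℝ) - (c A S : ℝ)) + 2 * (D : ℝ)) := by
            rw [Finset.sum_const, nsmul_eq_mul]
    have hmain : d * (F₁.card : ℝ) ≤ ((c B S : ℝ) - (c A S : ℝ)) + 2 * (D : ℝ) := by
      have := le_trans hsum1 hsum2
      nlinarith
    -- finish
    rw [hco F₁ h, hcoe, hcoe, ← hS]
    rw [le_div_iff₀ hnF₁]
    have hDε : (D : ℝ) < ε * (F₁.card : ℝ) := hinv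
    nlinarith
  rw [dadvF]
  exact le_ciInf key
end

section
/- Let G be a countable group and let 0 < ε < 1. Let 𝒮 be a nonempty finite collection of finite subsets of G, each containing the identity e (the shapes), let C ⊆ G (the centers) and let σ : C → 𝒮 assign a shape to each center. If the union of tiles T = ⋃_{c∈C} σ(c)·c has lower Banach density D(T) ≥ 1 − ε, then C is syndetic. -/
open scoped Pointwise

variable {G : Type*}

/-- The lower density of `B` with respect to the finite set `F`:
`D_F(B) = inf_{g ∈ G} |B ∩ Fg|/|F|`. -/
noncomputable def dlowF [Group G] (F : Finset G) (B : Set G) : ℝ :=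
  ⨅ g : G, ((B ∩ ((F : Set G) * {g})).ncard : ℝ) / (F.card : ℝ)

/-- The lower Banach density `D(B) = sup_F D_F(B)`, supremum over nonempty finite `F ⊆ G`. -/
noncomputable def dlow [Group G] (B : Set G) : ℝ :=
  ⨆ F : {F : Finset G // F.Nonempty}, dlowF F.1 B

/-- A set `A ⊆ G` is (left) syndetic if `UA = G` for some finite `U ⊆ G`. -/
def Syndetic [Group G] (A : Set G) : Prop :=
  ∃ U : Finset G, (U : Set G) * A = Set.univ

/-- If a quasitiling with shapes from a finite collection `𝒮` (each shape a finite set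
containing the identity), centers `C` and shape assignment `σ`, covers a set of lower
Banach density at least `1 − ε` (with `0 < ε < 1`), then the set of centers is syndetic. -/
theorem centers_syndetic_of_covering [Group G] [Countable G]
    (ε : ℝ) (hε0 : 0 < ε) (hε1 : ε < 1)
    (𝒮 : Finset (Finset G)) (h𝒮 : 𝒮.Nonempty) (hsh : ∀ S ∈ 𝒮, (1 : G) ∈ S)
    (C : Set G) (σ : G → Finset G) (hσ : ∀ c ∈ C, σ c ∈ 𝒮)
    (hcov : 1 - ε ≤ dlow (⋃ c ∈ C, ((σ c : Set G) * {c}))) :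
    Syndetic C := by
  classical
  set T : Set G := ⋃ c ∈ C, ((σ c : Set G) * {c}) with hT
  -- some F with positive lower F-density
  have h1 : ∃ F : {F : Finset G // F.Nonempty}, 0 < dlowF F.1 T := by
    by_contra h
    push_neg at h
    haveI : Nonempty {F : Finset G // F.Nonempty} := ⟨⟨{1}, Finset.singleton_nonempty 1⟩⟩
    have : dlow T ≤ 0 := ciSup_le h
    linarith
  obtain ⟨⟨F, hF⟩, hFpos⟩ := h1
  -- every translate Fg meets T
  have hmeet : ∀ g : G, (T ∩ ((F : Set G) * {g})).Nonempty := by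
    intro g
    have hbdd : BddBelow (Set.range fun g : G =>
        ((T ∩ ((F : Set G) * {g})).ncard : ℝ) / (F.card : ℝ)) := by
      refine ⟨0, ?_⟩
      rintro x ⟨g, rfl⟩
      positivity
    have hle : dlowF F T ≤ ((T ∩ ((F : Set G) * {g})).ncard : ℝ) / (F.card : ℝ) :=
      ciInf_le hbdd g
    have hpos : 0 < ((T ∩ ((F : Set G) * {g})).ncard : ℝ) / (F.card : ℝ) :=
      lt_of_lt_of_le hFpos hle
    have hn : (T ∩ ((F : Set G) * {g})).ncard ≠ 0 := by
      intro h0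
      rw [h0] at hpos
      simp at hpos
    exact Set.nonempty_of_ncard_ne_zero hn
  refine ⟨F⁻¹ * 𝒮.sup id, ?_⟩
  ext g
  simp only [Set.mem_univ, iff_true]
  obtain ⟨t, htT, htF⟩ := hmeet g
  rw [hT] at htT
  simp only [Set.mem_iUnion] at htT
  obtain ⟨c, hc, hts⟩ := htT
  obtain ⟨s, hs, x, hx, rfl⟩ := Set.mem_mul.1 hts
  obtain ⟨f, hf, y, hy, hfy⟩ := Set.mem_mul.1 htF
  simp only [Set.mem_singleton_iff] at hx hy
  rw [hx] at hfy
  rw [hy] at hfy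
  -- f * g = s * c, so g = f⁻¹ * s * c
  have hg : g = (f⁻¹ * s) * c := by
    rw [mul_assoc, ← hfy]; group
  rw [hg]
  refine Set.mul_mem_mul ?_ hc
  have hsK : s ∈ 𝒮.sup id := by
    refine Finset.mem_sup.2 ⟨σ c, hσ c hc, hs⟩
  have : f⁻¹ * s ∈ F⁻¹ * 𝒮.sup id := Finset.mul_mem_mul (Finset.inv_mem_inv hf) hsK
  exact_mod_cast Finset.mem_coe.2 this
end

section
/- Let G be a countable group, Λ a finite alphabet, X ⊆ Λ^G a subshift, and A, B ⊆ X disjoint clopen sets. For x ∈ X put A_x = {g ∈ G : g·x ∈ A} and B_x = {g ∈ G : g·x ∈ B}. Then A ≼ B if and only if there exists a family of maps φ̃_x : G → G (x ∈ X), determined by a block code, such that for every x ∈ X the restriction of φ̃_x to A_x is an injection into B_x. -/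
open scoped Pointwise

variable {G Λ : Type*}

/-- The shift action of `G` on `Λ^G`: `(g·x)_f = x_{fg}`. -/
def shift [Group G] (g : G) (x : G → Λ) : G → Λ := fun f => x (f * g)

/-- A family of maps `φ x : G → G` (for `x` in a subshift `X`) is determined by a block code
if there are a nonempty finite set `F ⊆ G` (the coding horizon), a finite set `E ⊆ G` and a
map `Ξ : Λ^F → E` such that `φ x g = Ξ((g·x)|_F)·g` for all `x ∈ X` and `g ∈ G`. -/
def DeterminedByBlockCode [Group G] (X : Set (G → Λ)) (φ : (G → Λ) → G → G) : Prop :=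
  ∃ F : Finset G, F.Nonempty ∧ ∃ (E : Finset G) (Ξ : (↥F → Λ) → G),
    (∀ w : ↥F → Λ, Ξ w ∈ E) ∧
    ∀ x ∈ X, ∀ g : G, φ x g = Ξ (fun f => shift g x f.1) * g

/-- Subequivalence `A ≼ B` of subsets of a subshift `X ⊆ Λ^G`: there is a finite partition of
`A` into sets clopen in `X` and group elements whose shifts map the pieces to pairwise
disjoint subsets of `B`. -/
def SubshiftSubequiv [Group G] [TopologicalSpace Λ] (X : Set (G → Λ))
    (A B : Set (G → Λ)) : Prop :=
  ∃ (n : ℕ) (C : Fin n → Set (G → Λ)) (g : Fin n → G),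
    (∀ i, C i ⊆ X ∧ IsClopen {x : X | (x : G → Λ) ∈ C i}) ∧
    (Pairwise fun i j => Disjoint (C i) (C j)) ∧
    (⋃ i, C i) = A ∧
    (Pairwise fun i j => Disjoint (shift (g i) '' C i) (shift (g j) '' C j)) ∧
    ∀ i, shift (g i) '' C i ⊆ B

lemma shift_shift [Group G] (a b : G) (x : G → Λ) : shift a (shift b x) = shift (a * b) x := by
  funext f; simp [shift, mul_assoc]

lemma shift_one [Group G] (x : G → Λ) : shift (1 : G) x = x := by
  funext f; simp [shift]

/-- Membership in a clopen (in `X`) subset of a compact subshift is determined by a finite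
window of coordinates. -/
lemma exists_determining [Group G] [Fintype Λ] [TopologicalSpace Λ] [DiscreteTopology Λ]
    {X : Set (G → Λ)} (hXcl : IsClosed X) {C : Set (G → Λ)} (hCX : C ⊆ X)
    (hC : IsClopen {x : X | (x : G → Λ) ∈ C}) :
    ∃ F : Finset G, ∀ y ∈ X, ∀ z ∈ X, (∀ f ∈ F, y f = z f) → y ∈ C → z ∈ C := by
  classical
  obtain ⟨V, hVopen, hVpre⟩ := isOpen_induced_iff.mp hC.isOpen
  have hmem : ∀ x, x ∈ X → (x ∈ V ↔ x ∈ C) := by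
    intro x hx
    have := Set.ext_iff.mp hVpre ⟨x, hx⟩
    simpa using this
  have hCV : C ⊆ V := fun x hx => (hmem x (hCX hx)).mpr hx
  -- `C` is compact
  have hCim : C = Subtype.val '' {x : X | (x : G → Λ) ∈ C} := by
    ext x
    constructor
    · intro hx; exact ⟨⟨x, hCX hx⟩, hx, rfl⟩
    · rintro ⟨⟨y, hy⟩, hmem', rfl⟩; exact hmem'
  have hCclosed : IsClosed C := by
    rw [hCim]
    exact hXcl.isClosedEmbedding_subtypeVal.isClosedMap _ hC.isClosed
  have hCcomp : IsCompact C := hCclosed.isCompact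
  -- choose windows
  have key : ∀ x ∈ C, ∃ I : Finset G, {y : G → Λ | ∀ f ∈ I, y f = x f} ⊆ V := by
    intro x hx
    obtain ⟨I, u, hu, hsub⟩ := (isOpen_pi_iff.mp hVopen) x (hCV hx)
    refine ⟨I, fun y hy => hsub ?_⟩
    intro f hf
    rw [Set.mem_setOf_eq] at hy
    rw [hy f (Finset.mem_coe.mp hf)]
    exact (hu f (Finset.mem_coe.mp hf)).2
  choose! I hI using key
  have hUopen : ∀ x : G → Λ, IsOpen {y : G → Λ | ∀ f ∈ I x, y f = x f} := by
    intro x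
    have : {y : G → Λ | ∀ f ∈ I x, y f = x f} =
        ⋂ f ∈ I x, (fun y : G → Λ => y f) ⁻¹' {x f} := by
      ext y; simp
    rw [this]
    exact isOpen_biInter_finset fun f _ =>
      (continuous_apply f).isOpen_preimage _ (isOpen_discrete _)
  obtain ⟨t, ht⟩ := hCcomp.elim_nhds_subcover'
    (fun x _ => {y : G → Λ | ∀ f ∈ I x, y f = x f})
    (fun x _ => (hUopen x).mem_nhds (fun f _ => rfl))
  refine ⟨t.biUnion (fun x => I x.1), ?_⟩
  intro y hy z hz hag hyC
  obtain ⟨x, hxt, hyU⟩ : ∃ x ∈ t, y ∈ {y : G → Λ | ∀ f ∈ I x.1, y f = x.1 f} := by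
    have := ht hyC
    simpa using this
  have hzU : z ∈ {y : G → Λ | ∀ f ∈ I x.1, y f = x.1 f} := by
    intro f hf
    have hfF : f ∈ t.biUnion (fun x => I x.1) :=
      Finset.mem_biUnion.mpr ⟨x, hxt, hf⟩
    rw [← hag f hfF]
    exact hyU f hf
  exact (hmem z hz).mp (hI x.1 x.2 hzU)

/-- For a subshift `X ⊆ Λ^G` and disjoint clopen `A, B ⊆ X`: `A ≼ B` iff there exists a
family of maps `φ x : G → G`, determined by a block code, such that for each `x ∈ X` the
restriction of `φ x` to `A_x = {g : g·x ∈ A}` is an injection into `B_x = {g : g·x ∈ B}`. -/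
theorem subequiv_iff_blockcode_injection [Group G] [Countable G] [Fintype Λ]
    [TopologicalSpace Λ] [DiscreteTopology Λ]
    (X : Set (G → Λ)) (hXne : X.Nonempty) (hXcl : IsClosed X)
    (hXinv : ∀ g : G, ∀ x ∈ X, shift g x ∈ X)
    (A B : Set (G → Λ)) (hAX : A ⊆ X) (hBX : B ⊆ X)
    (hA : IsClopen {x : X | (x : G → Λ) ∈ A}) (hB : IsClopen {x : X | (x : G → Λ) ∈ B})
    (hAB : Disjoint A B) :
    SubshiftSubequiv X A B ↔
      ∃ φ : (G → Λ) → G → G, DeterminedByBlockCode X φ ∧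
        ∀ x ∈ X, Set.InjOn (φ x) {g : G | shift g x ∈ A} ∧
          ∀ g ∈ {g : G | shift g x ∈ A}, φ x g ∈ {g : G | shift g x ∈ B} := by
  classical
  constructor
  · rintro ⟨n, C, g, hC, hdisj, hunion, himdisj, himB⟩
    have hdet : ∀ i, ∃ F : Finset G,
        ∀ y ∈ X, ∀ z ∈ X, (∀ f ∈ F, y f = z f) → y ∈ C i → z ∈ C i :=
      fun i => exists_determining hXcl (hC i).1 (hC i).2
    choose F0 hF0 using hdet
    set F : Finset G := insert 1 (Finset.univ.biUnion F0) with hF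
    have h1F : (1 : G) ∈ F := Finset.mem_insert_self _ _
    have hFi : ∀ i, F0 i ⊆ F := fun i =>
      (Finset.subset_biUnion_of_mem F0 (Finset.mem_univ i)).trans (Finset.subset_insert _ _)
    have hdetF : ∀ i, ∀ y ∈ X, ∀ z ∈ X, (∀ f : ↥F, y ↑f = z ↑f) → y ∈ C i → z ∈ C i := by
      intro i y hy z hz hag
      exact hF0 i y hy z hz (fun f hf => hag ⟨f, hFi i hf⟩)
    set Ξ : (↥F → Λ) → G := fun w =>
      if h : ∃ p : Fin n × (G → Λ), p.2 ∈ X ∧ p.2 ∈ C p.1 ∧ ∀ f : ↥F, p.2 ↑f = w f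
      then g h.choose.1 else 1 with hΞ
    have hkey : ∀ y ∈ X, ∀ i, y ∈ C i → Ξ (fun f => y ↑f) = g i := by
      intro y hy i hyC
      have hex : ∃ p : Fin n × (G → Λ), p.2 ∈ X ∧ p.2 ∈ C p.1 ∧
          ∀ f : ↥F, p.2 ↑f = (fun f : ↥F => y ↑f) f := ⟨(i, y), hy, hyC, fun f => rfl⟩
      rw [hΞ]
      simp only [dif_pos hex]
      obtain ⟨hpX, hpC, hpag⟩ := hex.choose_spec
      have hyC' : y ∈ C hex.choose.1 := hdetF _ _ hpX _ hy (fun f => hpag f) hpC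
      have hii : hex.choose.1 = i := by
        by_contra hne
        exact (Set.disjoint_left.mp (hdisj hne) hyC') hyC
      rw [hii]
    refine ⟨fun x g' => Ξ (fun f => shift g' x ↑f) * g',
      ⟨F, ⟨1, h1F⟩, Finset.image Ξ Finset.univ, Ξ,
        fun w => Finset.mem_image_of_mem _ (Finset.mem_univ w), fun x _ g' => rfl⟩, ?_⟩
    intro x hx
    have hmemC : ∀ g' : G, shift g' x ∈ A → ∃ i, shift g' x ∈ C i := by
      intro g' hg'
      rw [← hunion] at hg'
      exact Set.mem_iUnion.mp hg'
    constructor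
    · intro a ha b hb heq
      dsimp only at heq
      obtain ⟨i, hi⟩ := hmemC a ha
      obtain ⟨j, hj⟩ := hmemC b hb
      rw [hkey _ (hXinv a x hx) i hi, hkey _ (hXinv b x hx) j hj] at heq
      have hij : i = j := by
        by_contra hne
        have h1 : shift (g i * a) x ∈ shift (g i) '' C i := by
          rw [← shift_shift]; exact ⟨_, hi, rfl⟩
        have h2 : shift (g i * a) x ∈ shift (g j) '' C j := by
          rw [heq, ← shift_shift]; exact ⟨_, hj, rfl⟩
        exact (Set.disjoint_left.mp (himdisj hne) h1) h2
      subst hij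
      exact mul_left_cancel heq
    · intro g' hg'
      obtain ⟨i, hi⟩ := hmemC g' hg'
      have := hkey _ (hXinv g' x hx) i hi
      show shift (Ξ (fun f => shift g' x ↑f) * g') x ∈ B
      rw [this, ← shift_shift]
      exact himB i ⟨_, hi, rfl⟩
  · rintro ⟨φ, ⟨F, hFne, E, Ξ, hΞE, hφ⟩, hinj⟩
    set v : Fin E.card → G := fun i => ((E.equivFin.symm i : ↥E) : G) with hv
    have hvinj : Function.Injective v :=
      fun i j h => E.equivFin.symm.injective (Subtype.val_injective h)
    have hvmem : ∀ a ∈ E, ∃ i, v i = a := fun a ha =>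
      ⟨E.equivFin ⟨a, ha⟩, by simp [hv]⟩
    refine ⟨E.card, fun i => {x | x ∈ A ∧ Ξ (fun f => x ↑f) = v i}, v, ?_, ?_, ?_, ?_, ?_⟩
    · intro i
      constructor
      · exact fun x hx => hAX hx.1
      · have hcont : Continuous fun (x : ↥X) (f : ↥F) => (x : G → Λ) ↑f :=
          continuous_pi fun f => (continuous_apply (↑f : G)).comp continuous_subtype_val
        have h2 : IsClopen ((fun (x : ↥X) (f : ↥F) => (x : G → Λ) ↑f) ⁻¹'
            {w : ↥F → Λ | Ξ w = v i}) := (isClopen_discrete _).preimage hcont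
        have : {x : ↥X | (x : G → Λ) ∈ {x | x ∈ A ∧ Ξ (fun f => x ↑f) = v i}} =
            {x : ↥X | (x : G → Λ) ∈ A} ∩ ((fun (x : ↥X) (f : ↥F) => (x : G → Λ) ↑f) ⁻¹'
            {w : ↥F → Λ | Ξ w = v i}) := by
          ext x; simp [Set.mem_setOf_eq, Set.mem_inter_iff]
        rw [this]
        exact hA.inter h2
    · intro i j hne
      rw [Set.disjoint_left]
      rintro x ⟨-, hxi⟩ ⟨-, hxj⟩
      exact hne (hvinj (hxi ▸ hxj))
    · ext x
      simp only [Set.mem_iUnion, Set.mem_setOf_eq]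
      constructor
      · rintro ⟨i, hi, -⟩; exact hi
      · intro hx
        obtain ⟨i, hi⟩ := hvmem (Ξ (fun f => x ↑f)) (hΞE _)
        exact ⟨i, hx, hi.symm⟩
    · intro i j hne
      rw [Set.disjoint_left]
      rintro z ⟨x, hx, rfl⟩ ⟨x', hx', hzeq⟩
      have hxX : x ∈ X := hAX hx.1
      have hyX : shift (v i) x ∈ X := hXinv _ _ hxX
      have h1 : shift (v i)⁻¹ (shift (v i) x) = x := by
        rw [shift_shift, inv_mul_cancel, shift_one]
      have h2 : shift (v j)⁻¹ (shift (v i) x) = x' := by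
        rw [← hzeq, shift_shift, inv_mul_cancel, shift_one]
      have hA1 : (v i)⁻¹ ∈ {g : G | shift g (shift (v i) x) ∈ A} := by
        simp only [Set.mem_setOf_eq, h1]; exact hx.1
      have hA2 : (v j)⁻¹ ∈ {g : G | shift g (shift (v i) x) ∈ A} := by
        simp only [Set.mem_setOf_eq, h2]; exact hx'.1
      have hφ1 : φ (shift (v i) x) (v i)⁻¹ = 1 := by
        rw [hφ _ hyX]
        simp only [h1]
        rw [hx.2, mul_inv_cancel]
      have hφ2 : φ (shift (v i) x) (v j)⁻¹ = 1 := by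
        rw [hφ _ hyX]
        simp only [h2]
        rw [hx'.2, mul_inv_cancel]
      have := (hinj _ hyX).1 hA1 hA2 (hφ1.trans hφ2.symm)
      exact hne (hvinj (inv_injective this))
    · intro i
      rintro z ⟨x, hx, rfl⟩
      have hxX : x ∈ X := hAX hx.1
      have h1A : (1 : G) ∈ {g : G | shift g x ∈ A} := by
        simp only [Set.mem_setOf_eq, shift_one]; exact hx.1
      have hb := (hinj x hxX).2 1 h1A
      have hφ1 : φ x 1 = v i := by
        rw [hφ _ hxX]
        simp only [shift_one]
        rw [hx.2, mul_one]
      rw [Set.mem_setOf_eq, hφ1] at hb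
      exact hb
end

section
/- Let G be an infinite group and let A₁, …, A_k be finite subsets of G of equal cardinality at least 2. Then there exist elements g₁, …, g_k ∈ G with g_i ∉ A_i for each i, such that the collection {B₁, …, B_k}, where B_i = A_i ∪ {g_i}, is recognizable with recognizable origins. -/
open scoped Pointwise

variable {G : Type*}

noncomputable def gseq [Group G] [DecidableEq G] [Infinite G] (A : ℕ → Finset G) : ℕ → G
  | m =>
    Classical.choose (Infinite.exists_notMem_finset
      ((A m * (A m)⁻¹ * A m) ∪ (Finset.range m).attach.biUnion
        (fun j => (insert (gseq A j.1) (A j.1)) * (insert (gseq A j.1) (A j.1))⁻¹ * A m)))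
  decreasing_by all_goals exact Finset.mem_range.mp j.2

lemma gseq_spec [Group G] [DecidableEq G] [Infinite G] (A : ℕ → Finset G) (m : ℕ) :
    gseq A m ∉ (A m * (A m)⁻¹ * A m) ∧
    ∀ j < m, gseq A m ∉
      (insert (gseq A j) (A j)) * (insert (gseq A j) (A j))⁻¹ * A m := by
  have h : gseq A m ∉ ((A m * (A m)⁻¹ * A m) ∪ (Finset.range m).attach.biUnion
        (fun j => (insert (gseq A j.1) (A j.1)) * (insert (gseq A j.1) (A j.1))⁻¹ * A m)) := by
    intro hc
    rw [gseq] at hc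
    exact absurd hc (Classical.choose_spec (Infinite.exists_notMem_finset _))
  rw [Finset.mem_union] at h
  push_neg at h
  refine ⟨h.1, fun j hj hmem => h.2 ?_⟩
  rw [Finset.mem_biUnion]
  exact ⟨⟨j, Finset.mem_range.mpr hj⟩, Finset.mem_attach _ _, hmem⟩

/-- Given finite subsets `A₁, …, A_k` of an infinite group `G`, of equal cardinality at
least `2`, there exist `g_i ∉ A_i` such that the collection of the sets `B_i = A_i ∪ {g_i}`
is recognizable with recognizable origins: `B_i·g = B_j` forces `i = j` and `g = 1`. -/
theorem exists_recognizable_enlargement [Group G] [DecidableEq G] [Infinite G]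
    (k : ℕ) (A : Fin k → Finset G)
    (hcard : ∀ i j, (A i).card = (A j).card) (h2 : ∀ i, 2 ≤ (A i).card) :
    ∃ g : Fin k → G, (∀ i, g i ∉ A i) ∧
      ∀ (i j : Fin k) (h : G),
        insert (g i) (A i) * {h} = insert (g j) (A j) → i = j ∧ h = 1 := by
  set A' : ℕ → Finset G := fun n => if h : n < k then A ⟨n, h⟩ else ∅ with hA'
  have hA'eq : ∀ i : Fin k, A' i.1 = A i := by
    intro i; simp [hA', i.2]
  refine ⟨fun i => gseq A' i.1, ?_, ?_⟩
  · intro i hi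
    have hs := (gseq_spec A' i.1).1
    rw [hA'eq i] at hs
    have hmem : gseq A' i.1 * (gseq A' i.1)⁻¹ * gseq A' i.1 ∈ A i * (A i)⁻¹ * A i :=
      Finset.mul_mem_mul (Finset.mul_mem_mul hi (Finset.inv_mem_inv hi)) hi
    simp only [mul_inv_cancel, one_mul] at hmem
    exact hs hmem
  · intro i j h heq
    rcases lt_trichotomy i.1 j.1 with hlt | heqij | hlt
    · -- i < j : derive contradiction from g_j ∈ B_i * B_i⁻¹ * A_j
      exfalso
      have hs := (gseq_spec A' j.1).2 i.1 hlt
      rw [hA'eq i, hA'eq j] at hs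
      apply hs
      -- g_j ∈ B_j = B_i * {h}
      have hgj : gseq A' j.1 ∈ insert (gseq A' i.1) (A i) * {h} := by
        rw [heq]; exact Finset.mem_insert_self _ _
      obtain ⟨b, hb, c, hc, hbc⟩ := Finset.mem_mul.mp hgj
      rw [Finset.mem_singleton] at hc; rw [hc] at hbc
      -- a ∈ A j
      obtain ⟨a, ha⟩ := Finset.card_pos.mp (by have := h2 j; omega : 0 < (A j).card)
      have haB : a ∈ insert (gseq A' i.1) (A i) * {h} := by
        rw [heq]; exact Finset.mem_insert_of_mem ha
      obtain ⟨b', hb', c', hc', hbc'⟩ := Finset.mem_mul.mp haB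
      rw [Finset.mem_singleton] at hc'; rw [hc'] at hbc'
      have : gseq A' j.1 = b * b'⁻¹ * a := by
        rw [← hbc, ← hbc']; group
      rw [this]
      exact Finset.mul_mem_mul (Finset.mul_mem_mul hb (Finset.inv_mem_inv hb')) ha
    · -- i = j : show h = 1
      have hij : i = j := Fin.ext heqij
      subst hij
      refine ⟨rfl, ?_⟩
      have hs := (gseq_spec A' i.1).1
      rw [hA'eq i] at hs
      -- find a ∈ A i with a * h ∈ A i
      have hpigeon : ∃ a ∈ A i, a * h ∈ A i := by
        obtain ⟨a, ha, b, hb, hab⟩ := Finset.one_lt_card.mp (by have := h2 i; omega : 1 < (A i).card)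
        have haB : a * h ∈ insert (gseq A' i.1) (A i) := by
          rw [← heq]
          exact Finset.mul_mem_mul (Finset.mem_insert_of_mem ha) (Finset.mem_singleton_self h)
        have hbB : b * h ∈ insert (gseq A' i.1) (A i) := by
          rw [← heq]
          exact Finset.mul_mem_mul (Finset.mem_insert_of_mem hb) (Finset.mem_singleton_self h)
        rcases Finset.mem_insert.mp haB with h1 | h1
        · rcases Finset.mem_insert.mp hbB with h2 | h2
          · exact absurd (mul_right_cancel (h1.trans h2.symm)) hab
          · exact ⟨b, hb, h2⟩
        · exact ⟨a, ha, h1⟩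
      obtain ⟨a, ha, hah⟩ := hpigeon
      -- g_i ∈ B_i = B_i * {h}
      have hgi : gseq A' i.1 ∈ insert (gseq A' i.1) (A i) * {h} := by
        rw [heq]; exact Finset.mem_insert_self _ _
      obtain ⟨b, hb, c, hc, hbc⟩ := Finset.mem_mul.mp hgi
      rw [Finset.mem_singleton] at hc; rw [hc] at hbc
      rcases Finset.mem_insert.mp hb with h1 | h1
      · rw [h1] at hbc
        exact mul_left_cancel (hbc.trans (mul_one _).symm)
      · exfalso
        apply hs
        have : gseq A' i.1 = b * a⁻¹ * (a * h) := by rw [← hbc]; group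
        rw [this]
        exact Finset.mul_mem_mul (Finset.mul_mem_mul h1 (Finset.inv_mem_inv ha)) hah
    · -- j < i : derive contradiction from g_i ∈ B_j * B_j⁻¹ * A_i
      exfalso
      have hs := (gseq_spec A' i.1).2 j.1 hlt
      rw [hA'eq i, hA'eq j] at hs
      apply hs
      have hgi : gseq A' i.1 * h ∈ insert (gseq A' j.1) (A j) := by
        rw [← heq]
        exact Finset.mul_mem_mul (Finset.mem_insert_self _ _) (Finset.mem_singleton_self h)
      obtain ⟨a, ha⟩ := Finset.card_pos.mp (by have := h2 i; omega : 0 < (A i).card)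
      have hahB : a * h ∈ insert (gseq A' j.1) (A j) := by
        rw [← heq]
        exact Finset.mul_mem_mul (Finset.mem_insert_of_mem ha) (Finset.mem_singleton_self h)
      have : gseq A' i.1 = (gseq A' i.1 * h) * (a * h)⁻¹ * a := by group
      rw [this]
      exact Finset.mul_mem_mul (Finset.mul_mem_mul hgi (Finset.inv_mem_inv hahB)) ha
end

section
/- Let G be a group, let {A₁, …, A_k} be a collection of finite subsets of G of equal cardinality at least 2, each containing the identity e, which is recognizable with recognizable origins, and let g_{i,j} ∈ G for 1 ≤ i ≤ k and j ∈ ℕ. If the margin set ⋃_{1≤i',i,i''≤k} A_{i'}⁻¹·A_i·A_i⁻¹·A_{i''} is disjoint from the set {g_{i',j'}·(g_{i'',j''})⁻¹ : 1 ≤ i', i'' ≤ k, j', j'' ∈ ℕ, (i',j') ≠ (i'',j'')}, then the family {A_i·g_{i,j} : 1 ≤ i ≤ k, j ∈ ℕ} is fully recognizable: for any i₀ ∈ {1,…,k} and g ∈ G, the inclusion A_{i₀}·g ⊆ ⋃_{i,j} A_i·g_{i,j} implies that i₀ = i and g = g_{i,j} for some j ∈ ℕ. -/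
open scoped Pointwise

variable {G : Type*}

/-- Full recognizability: if `{A₁, …, A_k}` is a collection of finite subsets of `G` of equal
cardinality at least `2`, each containing the identity, recognizable with recognizable
origins, and the margin set `⋃ A_{i'}⁻¹·A_i·A_i⁻¹·A_{i''}` is disjoint from the set of
quotients `g_{i',j'}·g_{i'',j''}⁻¹` for `(i',j') ≠ (i'',j'')`, then the family
`{A_i·g_{i,j}}` is fully recognizable: `A_{i₀}·g ⊆ ⋃_{i,j} A_i·g_{i,j}` forces
`g = g_{i₀,j}` for some `j`. -/
theorem fully_recognizable [Group G] [DecidableEq G]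
    (k : ℕ) (A : Fin k → Finset G)
    (hcard : ∀ i j, (A i).card = (A j).card) (h2 : ∀ i, 2 ≤ (A i).card)
    (he : ∀ i, (1 : G) ∈ A i)
    (hrec : ∀ (i j : Fin k) (h : G), A i * {h} = A j → i = j ∧ h = 1)
    (gf : Fin k → ℕ → G)
    (hsep : Disjoint
      (⋃ (i' : Fin k) (i : Fin k) (i'' : Fin k),
        (((A i')⁻¹ * A i * (A i)⁻¹ * A i'' : Finset G) : Set G))
      {x : G | ∃ (i' i'' : Fin k) (j' j'' : ℕ),
        (i', j') ≠ (i'', j'') ∧ x = gf i' j' * (gf i'' j'')⁻¹})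
    (i₀ : Fin k) (g : G)
    (hsub : ((A i₀ : Set G) * {g}) ⊆
      ⋃ (i : Fin k) (j : ℕ), ((A i : Set G) * {gf i j})) :
    ∃ j : ℕ, g = gf i₀ j := by
  classical
  -- g itself lies in some translate
  have hg : g ∈ ⋃ (i : Fin k) (j : ℕ), ((A i : Set G) * {gf i j}) := by
    apply hsub
    exact ⟨1, by exact_mod_cast he i₀, g, rfl, one_mul g⟩
  rw [Set.mem_iUnion] at hg
  obtain ⟨i, hg⟩ := hg
  rw [Set.mem_iUnion] at hg
  obtain ⟨j, hg⟩ := hg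
  obtain ⟨a, ha, g', hg', hga⟩ := hg
  rw [Set.mem_singleton_iff] at hg'
  subst hg'
  have haA : a ∈ A i := by exact_mod_cast ha
  -- every element of A i₀ * {g} lies in the same translate
  have key : ∀ x ∈ A i₀, x * g ∈ (A i : Set G) * {gf i j} := by
    intro x hx
    have hmem : x * g ∈ ⋃ (i : Fin k) (j : ℕ), ((A i : Set G) * {gf i j}) := by
      apply hsub
      exact ⟨x, by exact_mod_cast hx, g, rfl, rfl⟩
    rw [Set.mem_iUnion] at hmem
    obtain ⟨i'', hmem⟩ := hmem
    rw [Set.mem_iUnion] at hmem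
    obtain ⟨j'', hmem⟩ := hmem
    obtain ⟨b, hb, g'', hg'', hbeq⟩ := hmem
    rw [Set.mem_singleton_iff] at hg''
    subst hg''
    have hbA : b ∈ A i'' := by exact_mod_cast hb
    by_cases hij : (i, j) = (i'', j'')
    · obtain ⟨hij1, hij2⟩ := Prod.mk.injEq .. ▸ hij
      subst hij1; subst hij2
      exact ⟨b, hb, gf i j, rfl, hbeq⟩
    · exfalso
      have h1 : gf i j = a⁻¹ * g := by rw [← hga]; group
      have h2' : gf i'' j'' = b⁻¹ * (x * g) := by rw [← hbeq]; group
      have hq : gf i j * (gf i'' j'')⁻¹ = a⁻¹ * 1 * x⁻¹ * b := by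
        rw [h1, h2']; group
      have hmemF : a⁻¹ * 1 * x⁻¹ * b ∈ ((A i)⁻¹ * A i₀ * (A i₀)⁻¹ * A i'' : Finset G) :=
        Finset.mul_mem_mul (Finset.mul_mem_mul (Finset.mul_mem_mul
          (Finset.inv_mem_inv haA) (he i₀)) (Finset.inv_mem_inv hx)) hbA
      have hleft : gf i j * (gf i'' j'')⁻¹ ∈
          ⋃ (i' : Fin k) (m : Fin k) (i'' : Fin k),
            (((A i')⁻¹ * A m * (A m)⁻¹ * A i'' : Finset G) : Set G) := by
        rw [Set.mem_iUnion]; refine ⟨i, ?_⟩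
        rw [Set.mem_iUnion]; refine ⟨i₀, ?_⟩
        rw [Set.mem_iUnion]; refine ⟨i'', ?_⟩
        rw [hq]; exact_mod_cast hmemF
      have hright : gf i j * (gf i'' j'')⁻¹ ∈
          {x : G | ∃ (i' i'' : Fin k) (j' j'' : ℕ),
            (i', j') ≠ (i'', j'') ∧ x = gf i' j' * (gf i'' j'')⁻¹} :=
        ⟨i, i'', j, j'', hij, rfl⟩
      exact Set.disjoint_left.mp hsep hleft hright
  -- upgrade to Finset inclusion and then equality by cardinality
  have hsubF : (A i₀ * {g} : Finset G) ⊆ A i * {gf i j} := by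
    intro y hy
    rw [Finset.mem_mul] at hy
    obtain ⟨x, hx, z, hz, hxy⟩ := hy
    rw [Finset.mem_singleton] at hz
    subst hz
    have := key x hx
    rw [← hxy]
    have : x * z ∈ ((A i * {gf i j} : Finset G) : Set G) := by
      rw [Finset.coe_mul, Finset.coe_singleton]; exact this
    exact_mod_cast this
  have hcards : (A i * {gf i j} : Finset G).card ≤ (A i₀ * {g} : Finset G).card := by
    rw [Finset.card_mul_singleton, Finset.card_mul_singleton]
    exact (hcard i i₀).le
  have heq : (A i₀ * {g} : Finset G) = A i * {gf i j} :=
    Finset.eq_of_subset_of_card_le hsubF hcards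
  have heq2 : A i₀ * {g * (gf i j)⁻¹} = A i := by
    have : ({g * (gf i j)⁻¹} : Finset G) = {g} * {(gf i j)⁻¹} := by
      rw [Finset.singleton_mul_singleton]
    rw [this, ← mul_assoc, heq, mul_assoc, Finset.singleton_mul_singleton,
      mul_inv_cancel]
    exact mul_one (A i)
  obtain ⟨hii, hgg⟩ := hrec i₀ i (g * (gf i j)⁻¹) heq2
  subst hii
  exact ⟨j, by rwa [mul_inv_eq_one] at hgg⟩
end
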